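/- arXiv:0909.1377 — 16 statements merged into one kernel-verified Lean document; each statement's English description precedes it below -/
import Mathlib

section
/- Let F be a field of characteristic not 2 and t1,u1,t2,u2 in F with t1*u2 - t2*u1 ≠ 0. Then the join of the null points α(t1:u1)=[t1^2-u1^2 : 2t1u1 : t1^2+u1^2] and α(t2:u2)=[t2^2-u2^2 : 2t2u2 : t2^2+u2^2] is the line (t1t2-u1u2 : t1u2+t2u1 : t1t2+u1u2), i.e., the hyperbolic cross product of the two coordinate vectors is a nonzero scalar multiple of (t1t2-u1u2, t1u2+t2u1, t1t2+u1u2). Moreover this line is non-null: (t1t2-u1u2)^2 + (t1u2+t2u1)^2 - (t1t2+u1u2)^2 = (t1u2-t2u1)^2 ≠ 0. -/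
/-- Join of null points: the join of α(t1:u1) and α(t2:u2) is the non-null line
    (t1t2-u1u2 : t1u2+t2u1 : t1t2+u1u2). -/
theorem join_of_null_points {F : Type*} [Field F] (hchar : (2 : F) ≠ 0)
    (t1 u1 t2 u2 : F) (hdist : t1*u2 - t2*u1 ≠ 0) :
    (∃ lam : F, lam ≠ 0 ∧
      (2*t1*u1) * (t2^2 + u2^2) - (2*t2*u2) * (t1^2 + u1^2) = lam * (t1*t2 - u1*u2) ∧
      (t1^2 + u1^2) * (t2^2 - u2^2) - (t2^2 + u2^2) * (t1^2 - u1^2) = lam * (t1*u2 + t2*u1) ∧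
      (t2^2 - u2^2) * (2*t1*u1) - (t1^2 - u1^2) * (2*t2*u2) = lam * (t1*t2 + u1*u2)) ∧
    (t1*t2 - u1*u2)^2 + (t1*u2 + t2*u1)^2 - (t1*t2 + u1*u2)^2 = (t1*u2 - t2*u1)^2 ∧
    (t1*t2 - u1*u2)^2 + (t1*u2 + t2*u1)^2 - (t1*t2 + u1*u2)^2 ≠ 0 := by
  refine ⟨⟨2*(t2*u1 - t1*u2), ?_, by ring, by ring, by ring⟩, by ring, ?_⟩
  · exact mul_ne_zero hchar (by intro h; apply hdist; linear_combination -h)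
  · intro h; apply hdist; have : (t1*u2 - t2*u1)^2 = 0 := by linear_combination h
    exact pow_eq_zero_iff (by norm_num) |>.mp this
end

section
/- Let F be a field of characteristic not 2, let a1=[x1:y1:z1] be a null point (x1^2+y1^2-z1^2=0) and let a2=[x2:y2:z2] be any point distinct from a1. Then the join a1a2 = (y1z2-y2z1 : z1x2-z2x1 : x2y1-x1y2) is a null line if and only if x1x2+y1y2-z1z2 = 0 (a1 and a2 are perpendicular). -/
/-- Perpendicular null line: if a1 is a null point and a2 is a point distinct from a1,
    then the join a1a2 is a null line iff a1 and a2 are perpendicular. -/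
theorem perpendicular_null_line {F : Type*} [Field F] (hchar : (2 : F) ≠ 0)
    (x1 y1 z1 x2 y2 z2 : F)
    (h1null : x1^2 + y1^2 - z1^2 = 0)
    (h1nz : ¬(x1 = 0 ∧ y1 = 0 ∧ z1 = 0)) (h2nz : ¬(x2 = 0 ∧ y2 = 0 ∧ z2 = 0))
    (hdist : ¬(x1*y2 - x2*y1 = 0 ∧ y1*z2 - y2*z1 = 0 ∧ z1*x2 - z2*x1 = 0)) :
    ((y1*z2 - y2*z1)^2 + (z1*x2 - z2*x1)^2 - (x2*y1 - x1*y2)^2 = 0 ↔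
      x1*x2 + y1*y2 - z1*z2 = 0) := by
  have key : (y1*z2 - y2*z1)^2 + (z1*x2 - z2*x1)^2 - (x2*y1 - x1*y2)^2
      = (x1*x2 + y1*y2 - z1*z2)^2
        - (x1^2 + y1^2 - z1^2) * (x2^2 + y2^2 - z2^2) := by ring
  rw [key, h1null, zero_mul, sub_zero, pow_eq_zero_iff two_ne_zero]
end

section
/- Let F be a field of characteristic not 2 and let a1, a2 be distinct non-null points with coordinates (x1,y1,z1), (x2,y2,z2). Define the quadrance q(a1,a2) = 1 - (x1x2+y1y2-z1z2)^2 / ((x1^2+y1^2-z1^2)(x2^2+y2^2-z2^2)). Then q(a1,a2) = 0 if and only if the join a1a2 = (y1z2-y2z1 : z1x2-z2x1 : x2y1-x1y2) is a null line (satisfies l^2+m^2-n^2=0). -/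
/-- Zero quadrance: for distinct non-null points, the quadrance is zero precisely
    when the join is a null line. -/
theorem zero_quadrance {F : Type*} [Field F] (hchar : (2 : F) ≠ 0)
    (x1 y1 z1 x2 y2 z2 : F)
    (h1 : x1^2 + y1^2 - z1^2 ≠ 0) (h2 : x2^2 + y2^2 - z2^2 ≠ 0)
    (hdist : ¬(x1*y2 - x2*y1 = 0 ∧ y1*z2 - y2*z1 = 0 ∧ z1*x2 - z2*x1 = 0)) :
    (1 - (x1*x2 + y1*y2 - z1*z2)^2 / ((x1^2 + y1^2 - z1^2) * (x2^2 + y2^2 - z2^2)) = 0 ↔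
      (y1*z2 - y2*z1)^2 + (z1*x2 - z2*x1)^2 - (x2*y1 - x1*y2)^2 = 0) := by
  rw [sub_eq_zero, eq_comm, div_eq_one_iff_eq (mul_ne_zero h1 h2), ← sub_eq_zero]
  constructor <;> intro h <;> [linear_combination h; linear_combination h]
end

section
/- Let F be a field of characteristic not 2 and let a1=[x1:y1:z1], a2=[x2:y2:z2], a3=[x3:y3:z3] be collinear non-null points (the 3×3 determinant of their coordinates vanishes, and each xi^2+yi^2-zi^2 ≠ 0). Let q1=q(a2,a3), q2=q(a1,a3), q3=q(a1,a2) where q is the quadrance. Then (q1+q2+q3)^2 = 2(q1^2+q2^2+q3^2) + 4*q1*q2*q3. -/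
set_option maxHeartbeats 1000000 in
/-- Triple quad formula: for collinear non-null points the three quadrances satisfy
    (q1+q2+q3)² = 2(q1²+q2²+q3²) + 4 q1 q2 q3. -/
theorem triple_quad_formula {F : Type*} [Field F] (hchar : (2 : F) ≠ 0)
    (x1 y1 z1 x2 y2 z2 x3 y3 z3 : F)
    (h1 : x1^2 + y1^2 - z1^2 ≠ 0) (h2 : x2^2 + y2^2 - z2^2 ≠ 0) (h3 : x3^2 + y3^2 - z3^2 ≠ 0)
    (hcol : x1*y2*z3 - x1*y3*z2 + x2*y3*z1 - x3*y2*z1 + x3*y1*z2 - x2*y1*z3 = 0)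
    (q1 q2 q3 : F)
    (hq1 : q1 = 1 - (x2*x3 + y2*y3 - z2*z3)^2 / ((x2^2 + y2^2 - z2^2) * (x3^2 + y3^2 - z3^2)))
    (hq2 : q2 = 1 - (x1*x3 + y1*y3 - z1*z3)^2 / ((x1^2 + y1^2 - z1^2) * (x3^2 + y3^2 - z3^2)))
    (hq3 : q3 = 1 - (x1*x2 + y1*y2 - z1*z2)^2 / ((x1^2 + y1^2 - z1^2) * (x2^2 + y2^2 - z2^2))) :
    (q1 + q2 + q3)^2 = 2*(q1^2 + q2^2 + q3^2) + 4*q1*q2*q3 := by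
  have hdet : (x1^2 + y1^2 - z1^2)*(x2^2 + y2^2 - z2^2)*(x3^2 + y3^2 - z3^2)
      - (x2*x3 + y2*y3 - z2*z3)^2*(x1^2 + y1^2 - z1^2)
      - (x1*x3 + y1*y3 - z1*z3)^2*(x2^2 + y2^2 - z2^2)
      - (x1*x2 + y1*y2 - z1*z2)^2*(x3^2 + y3^2 - z3^2)
      + 2*(x2*x3 + y2*y3 - z2*z3)*(x1*x3 + y1*y3 - z1*z3)*(x1*x2 + y1*y2 - z1*z2) = 0 := by
    linear_combination (-(x1*y2*z3 - x1*y3*z2 + x2*y3*z1 - x3*y2*z1 + x3*y1*z2 - x2*y1*z3)) * hcol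
  set n1 := x1^2 + y1^2 - z1^2 with hn1
  set n2 := x2^2 + y2^2 - z2^2 with hn2
  set n3 := x3^2 + y3^2 - z3^2 with hn3
  set a := x2*x3 + y2*y3 - z2*z3 with ha
  set b := x1*x3 + y1*y3 - z1*z3 with hb
  set c := x1*x2 + y1*y2 - z1*z2 with hc
  clear_value n1 n2 n3 a b c
  -- now hdet : n1*n2*n3 - a^2*n1 - b^2*n2 - c^2*n3 + 2*a*b*c = 0
  have hM : n1*n2*n3 ≠ 0 := mul_ne_zero (mul_ne_zero h1 h2) h3
  have e1' : q1 * (n2*n3) = n2*n3 - a^2 := by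
    rw [hq1]; field_simp
  have e2' : q2 * (n1*n3) = n1*n3 - b^2 := by
    rw [hq2]; field_simp
  have e3' : q3 * (n1*n2) = n1*n2 - c^2 := by
    rw [hq3]; field_simp
  have e1 : q1 * (n1*n2*n3) = (n2*n3 - a^2)*n1 := by linear_combination n1 * e1'
  have e2 : q2 * (n1*n2*n3) = (n1*n3 - b^2)*n2 := by linear_combination n2 * e2'
  have e3 : q3 * (n1*n2*n3) = (n1*n2 - c^2)*n3 := by linear_combination n3 * e3'
  have ep : q1*q2*q3 * (n1*n2*n3)^2 = (n2*n3 - a^2)*(n1*n3 - b^2)*(n1*n2 - c^2) := by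
    have h' : q1*q2*q3 * (n1*n2*n3)^2 = (q1*(n2*n3))*(q2*(n1*n3))*(q3*(n1*n2)) := by ring
    rw [h', e1', e2', e3']
  have main : ((q1 + q2 + q3)^2 - (2*(q1^2 + q2^2 + q3^2) + 4*q1*q2*q3)) * (n1*n2*n3)^2 = 0 := by
    have expand : ((q1 + q2 + q3)^2 - (2*(q1^2 + q2^2 + q3^2) + 4*q1*q2*q3)) * (n1*n2*n3)^2
        = (q1*(n1*n2*n3) + q2*(n1*n2*n3) + q3*(n1*n2*n3))^2
          - 2*((q1*(n1*n2*n3))^2 + (q2*(n1*n2*n3))^2 + (q3*(n1*n2*n3))^2)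
          - 4*(q1*q2*q3*(n1*n2*n3)^2) := by ring
    rw [expand, e1, e2, e3, ep]
    linear_combination (-(n1*n2*n3 - a^2*n1 - b^2*n2 - c^2*n3 - 2*a*b*c)) * hdet
  rcases mul_eq_zero.mp main with h | h
  · linear_combination h
  · exact absurd h (pow_ne_zero 2 hM)
end

section
/- Let F be a field of characteristic not 2 and let a1, a2, a3 be distinct non-null points with coordinate vectors (xi,yi,zi). If the lines a1a3 and a2a3 are perpendicular, i.e., (x3^2+y3^2-z3^2)(x1x2+y1y2-z1z2) = (x2x3+y2y3-z2z3)(x1x3+y1y3-z1z3), then the quadrances q1=q(a2,a3), q2=q(a1,a3), q3=q(a1,a2) satisfy q3 = q1 + q2 - q1*q2, equivalently 1-q3 = (1-q1)(1-q2). -/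
/-! Writing `1 - q(aᵢ, aⱼ) = Bᵢⱼ² / (Aᵢ Aⱼ)` with `Aᵢ` the norm and `Bᵢⱼ` the bilinear form,
perpendicularity at `a₃` reads `A₃ B₁₂ = B₂₃ B₁₃`, and then `B₁₂² / (A₁ A₂)` factors as
`B₂₃² / (A₂ A₃) · B₁₃² / (A₁ A₃)` after cancelling `A₃²`. -/

theorem sq_div_eq_sq_div_mul_sq_div_of_mul_eq {F : Type*} [Field F] {a b c d e f : F}
    (hc : c ≠ 0) (h : c * f = d * e) :
    f ^ 2 / (a * b) = d ^ 2 / (b * c) * (e ^ 2 / (a * c)) := by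
  rw [div_mul_div_comm, ← mul_pow, ← h, mul_pow, show b * c * (a * c) = c ^ 2 * (a * b) by ring,
    mul_div_mul_left _ _ (pow_ne_zero 2 hc)]

theorem hyperbolic_pythagoras_general {F : Type*} [Field F]
    (x1 y1 z1 x2 y2 z2 x3 y3 z3 : F)
    (h3 : x3^2 + y3^2 - z3^2 ≠ 0)
    (hperp : (x3^2 + y3^2 - z3^2) * (x1*x2 + y1*y2 - z1*z2) =
      (x2*x3 + y2*y3 - z2*z3) * (x1*x3 + y1*y3 - z1*z3))
    (q1 q2 q3 : F)
    (hq1 : q1 = 1 - (x2*x3 + y2*y3 - z2*z3)^2 / ((x2^2 + y2^2 - z2^2) * (x3^2 + y3^2 - z3^2)))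
    (hq2 : q2 = 1 - (x1*x3 + y1*y3 - z1*z3)^2 / ((x1^2 + y1^2 - z1^2) * (x3^2 + y3^2 - z3^2)))
    (hq3 : q3 = 1 - (x1*x2 + y1*y2 - z1*z2)^2 / ((x1^2 + y1^2 - z1^2) * (x2^2 + y2^2 - z2^2))) :
    q3 = q1 + q2 - q1*q2 ∧ 1 - q3 = (1 - q1) * (1 - q2) := by
  have key : 1 - q3 = (1 - q1) * (1 - q2) := by
    simp only [hq1, hq2, hq3, sub_sub_cancel]
    exact sq_div_eq_sq_div_mul_sq_div_of_mul_eq h3 hperp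
  exact ⟨by linear_combination -key, key⟩

/-- Hyperbolic Pythagoras: if the lines a1a3 and a2a3 are perpendicular then
    q3 = q1 + q2 - q1 q2. -/
theorem hyperbolic_pythagoras {F : Type*} [Field F] (hchar : (2 : F) ≠ 0)
    (x1 y1 z1 x2 y2 z2 x3 y3 z3 : F)
    (h1 : x1^2 + y1^2 - z1^2 ≠ 0) (h2 : x2^2 + y2^2 - z2^2 ≠ 0) (h3 : x3^2 + y3^2 - z3^2 ≠ 0)
    (hperp : (x3^2 + y3^2 - z3^2) * (x1*x2 + y1*y2 - z1*z2) =
      (x2*x3 + y2*y3 - z2*z3) * (x1*x3 + y1*y3 - z1*z3))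
    (q1 q2 q3 : F)
    (hq1 : q1 = 1 - (x2*x3 + y2*y3 - z2*z3)^2 / ((x2^2 + y2^2 - z2^2) * (x3^2 + y3^2 - z3^2)))
    (hq2 : q2 = 1 - (x1*x3 + y1*y3 - z1*z3)^2 / ((x1^2 + y1^2 - z1^2) * (x3^2 + y3^2 - z3^2)))
    (hq3 : q3 = 1 - (x1*x2 + y1*y2 - z1*z2)^2 / ((x1^2 + y1^2 - z1^2) * (x2^2 + y2^2 - z2^2))) :
    q3 = q1 + q2 - q1*q2 ∧ 1 - q3 = (1 - q1) * (1 - q2) :=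
  hyperbolic_pythagoras_general x1 y1 z1 x2 y2 z2 x3 y3 z3 h3 hperp q1 q2 q3 hq1 hq2 hq3
end

section
/- Let F be a field of characteristic not 2 and let a1, a2, a3 be non-null points with coordinate vectors vi=(xi,yi,zi). Then the following polynomial identity holds: -det(v1,v2,v3)^2 + (x1^2+y1^2-z1^2)(x2x3+y2y3-z2z3)^2 + (x2^2+y2^2-z2^2)(x1x3+y1y3-z1z3)^2 + (x3^2+y3^2-z3^2)(x1x2+y1y2-z1z2)^2 - (x1^2+y1^2-z1^2)(x2^2+y2^2-z2^2)(x3^2+y3^2-z3^2) = 2(x2x3+y2y3-z2z3)(x1x3+y1y3-z1z3)(x1x2+y1y2-z1z2). Consequently, with quadrea A = -det(v1,v2,v3)^2/∏(xi^2+yi^2-zi^2) and quadrances q1,q2,q3, one has (A - q1 - q2 - q3 + 2)^2 = 4(1-q1)(1-q2)(1-q3). -/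
lemma cross_law_aux {F : Type*} [Field F] (a b c p1 p2 p3 D : F)
    (ha : a ≠ 0) (hb : b ≠ 0) (hc : c ≠ 0)
    (key : -D^2 + a*p1^2 + b*p2^2 + c*p3^2 - a*b*c = 2*p1*p2*p3) :
    (-D^2/(a*b*c) - (1 - p1^2/(b*c)) - (1 - p2^2/(a*c)) - (1 - p3^2/(a*b)) + 2)^2
      = 4*(1 - (1 - p1^2/(b*c)))*(1 - (1 - p2^2/(a*c)))*(1 - (1 - p3^2/(a*b))) := by
  have h : -D^2/(a*b*c) - (1 - p1^2/(b*c)) - (1 - p2^2/(a*c)) - (1 - p3^2/(a*b)) + 2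
      = 2*p1*p2*p3/(a*b*c) := by
    have hd : a*b*c ≠ 0 := mul_ne_zero (mul_ne_zero ha hb) hc
    have e1 : p1^2/(b*c) = a*p1^2/(a*b*c) := by
      rw [div_eq_div_iff (mul_ne_zero hb hc) hd]; ring
    have e2 : p2^2/(a*c) = b*p2^2/(a*b*c) := by
      rw [div_eq_div_iff (mul_ne_zero ha hc) hd]; ring
    have e3 : p3^2/(a*b) = c*p3^2/(a*b*c) := by
      rw [div_eq_div_iff (mul_ne_zero ha hb) hd]; ring
    rw [e1, e2, e3, eq_div_iff hd]
    simp only [sub_mul, add_mul, one_mul, div_mul_cancel₀ _ hd]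
    linear_combination key
  rw [h]
  field_simp
  ring

/-- The Cross law of universal hyperbolic geometry: the fundamental polynomial identity
    and its consequence (A - q1 - q2 - q3 + 2)² = 4(1-q1)(1-q2)(1-q3). -/
theorem cross_law {F : Type*} [Field F] (hchar : (2 : F) ≠ 0)
    (x1 y1 z1 x2 y2 z2 x3 y3 z3 : F)
    (h1 : x1^2 + y1^2 - z1^2 ≠ 0) (h2 : x2^2 + y2^2 - z2^2 ≠ 0) (h3 : x3^2 + y3^2 - z3^2 ≠ 0)
    (q1 q2 q3 A : F)
    (hq1 : q1 = 1 - (x2*x3 + y2*y3 - z2*z3)^2 / ((x2^2 + y2^2 - z2^2) * (x3^2 + y3^2 - z3^2)))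
    (hq2 : q2 = 1 - (x1*x3 + y1*y3 - z1*z3)^2 / ((x1^2 + y1^2 - z1^2) * (x3^2 + y3^2 - z3^2)))
    (hq3 : q3 = 1 - (x1*x2 + y1*y2 - z1*z2)^2 / ((x1^2 + y1^2 - z1^2) * (x2^2 + y2^2 - z2^2)))
    (hA : A = -(x1*y2*z3 - x1*y3*z2 + x2*y3*z1 - x3*y2*z1 + x3*y1*z2 - x2*y1*z3)^2 /
      ((x1^2 + y1^2 - z1^2) * (x2^2 + y2^2 - z2^2) * (x3^2 + y3^2 - z3^2))) :
    (-(x1*y2*z3 - x1*y3*z2 + x2*y3*z1 - x3*y2*z1 + x3*y1*z2 - x2*y1*z3)^2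
      + (x1^2 + y1^2 - z1^2) * (x2*x3 + y2*y3 - z2*z3)^2
      + (x2^2 + y2^2 - z2^2) * (x1*x3 + y1*y3 - z1*z3)^2
      + (x3^2 + y3^2 - z3^2) * (x1*x2 + y1*y2 - z1*z2)^2
      - (x1^2 + y1^2 - z1^2) * (x2^2 + y2^2 - z2^2) * (x3^2 + y3^2 - z3^2)
      = 2 * (x2*x3 + y2*y3 - z2*z3) * (x1*x3 + y1*y3 - z1*z3) * (x1*x2 + y1*y2 - z1*z2))
    ∧ (A - q1 - q2 - q3 + 2)^2 = 4*(1 - q1)*(1 - q2)*(1 - q3) := by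
  have key : -(x1*y2*z3 - x1*y3*z2 + x2*y3*z1 - x3*y2*z1 + x3*y1*z2 - x2*y1*z3)^2
      + (x1^2 + y1^2 - z1^2) * (x2*x3 + y2*y3 - z2*z3)^2
      + (x2^2 + y2^2 - z2^2) * (x1*x3 + y1*y3 - z1*z3)^2
      + (x3^2 + y3^2 - z3^2) * (x1*x2 + y1*y2 - z1*z2)^2
      - (x1^2 + y1^2 - z1^2) * (x2^2 + y2^2 - z2^2) * (x3^2 + y3^2 - z3^2)
      = 2 * (x2*x3 + y2*y3 - z2*z3) * (x1*x3 + y1*y3 - z1*z3) * (x1*x2 + y1*y2 - z1*z2) := by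
    ring
  refine ⟨key, ?_⟩
  subst hq1 hq2 hq3 hA
  have := cross_law_aux (x1^2 + y1^2 - z1^2) (x2^2 + y2^2 - z2^2) (x3^2 + y3^2 - z3^2)
    (x2*x3 + y2*y3 - z2*z3) (x1*x3 + y1*y3 - z1*z3) (x1*x2 + y1*y2 - z1*z2)
    (x1*y2*z3 - x1*y3*z2 + x2*y3*z1 - x3*y2*z1 + x3*y1*z2 - x2*y1*z3)
    h1 h2 h3 (by linear_combination key)
  convert this using 2 <;> ring
end

section
/- Let F be a field of characteristic not 2 and let a1,a2,a3 be non-null points with coordinate vectors vi=(xi,yi,zi), whose pairwise joins are non-null lines. With quadrances q1,q2,q3, spreads S1,S2,S3 (S1 the spread between lines a1a2 and a1a3, etc.), and quadrea A = -det(v1,v2,v3)^2/∏(xi^2+yi^2-zi^2), one has q2*q3*S1 = q1*q3*S2 = q1*q2*S3 = A; in particular S1/q1 = S2/q2 = S3/q3 whenever q1,q2,q3 are nonzero. -/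
/-!
Write `dᵢ = vᵢ·vᵢ` and `pᵢⱼ = vᵢ·vⱼ`. The hyperbolic cross product satisfies the Binet–Cauchy
identity `J(a,b)·J(c,d) = (a·d)(b·c) - (a·c)(b·d)`, so every quadrance and spread is a rational
function of the Gram entries, and `q₂q₃S₁` collapses to `det G / (d₁d₂d₃)` for the Gram matrix `G`.
Since `G = V η Vᵀ` with `η = diag(1, 1, -1)`, `det G = -(det V)²`. The other two vertices follow by
cyclic symmetry, and dividing the three equal products by `q₁q₂q₃` gives the spread law.
-/

namespace Hyperbolic

open Matrix

variable {F : Type*} [Field F]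

def hdot (u v : Fin 3 → F) : F := u 0 * v 0 + u 1 * v 1 - u 2 * v 2

def hcross (u v : Fin 3 → F) : Fin 3 → F :=
  ![u 1 * v 2 - v 1 * u 2, u 2 * v 0 - v 2 * u 0, v 0 * u 1 - u 0 * v 1]

/-- Also the spread between two lines, applied to their coordinate vectors. -/
def quadrance (u v : Fin 3 → F) : F := 1 - hdot u v ^ 2 / (hdot u u * hdot v v)

def quadrea (a b c : Fin 3 → F) : F :=
  -(of ![a, b, c]).det ^ 2 / (hdot a a * hdot b b * hdot c c)

theorem hdot_comm (u v : Fin 3 → F) : hdot u v = hdot v u := by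
  unfold hdot
  ring

theorem hdot_vec3 (x y z x' y' z' : F) :
    hdot ![x, y, z] ![x', y', z'] = x * x' + y * y' - z * z' := rfl

theorem hcross_vec3 (x y z x' y' z' : F) :
    hcross ![x, y, z] ![x', y', z'] = ![y * z' - y' * z, z * x' - z' * x, x' * y - x * y'] := rfl

theorem quadrance_comm (u v : Fin 3 → F) : quadrance u v = quadrance v u := by
  rw [quadrance, quadrance, hdot_comm u v, mul_comm]

theorem hdot_hcross_hcross (a b c d : Fin 3 → F) :
    hdot (hcross a b) (hcross c d) = hdot a d * hdot b c - hdot a c * hdot b d := by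
  simp only [hdot, hcross, cons_val_zero, cons_val_one, cons_val_two, head_cons, tail_cons]
  ring

theorem gram_eq_mul_diagonal_mul_transpose (v : Fin 3 → Fin 3 → F) :
    of (fun i j => hdot (v i) (v j)) = of v * diagonal ![1, 1, -1] * (of v)ᵀ := by
  ext i j
  simp [mul_apply, Fin.sum_univ_three, hdot]
  ring

theorem det_gram (v : Fin 3 → Fin 3 → F) :
    (of fun i j => hdot (v i) (v j)).det = -(of v).det ^ 2 := by
  rw [gram_eq_mul_diagonal_mul_transpose, det_mul, det_mul, det_transpose, det_diagonal]
  simp [Fin.prod_univ_three]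
  ring

theorem neg_det_sq_eq_gram_det (a b c : Fin 3 → F) :
    -(of ![a, b, c]).det ^ 2 = hdot a a * hdot b b * hdot c c
      + 2 * hdot a b * hdot b c * hdot a c
      - hdot a a * hdot b c ^ 2 - hdot b b * hdot a c ^ 2 - hdot c c * hdot a b ^ 2 := by
  rw [← det_gram, det_fin_three]
  simp only [of_apply, cons_val_zero, cons_val_one, cons_val_two, head_cons, tail_cons]
  rw [hdot_comm b a, hdot_comm c a, hdot_comm c b]
  ring

theorem quadrea_rotate (a b c : Fin 3 → F) : quadrea b c a = quadrea a b c := by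
  simp only [quadrea, det_fin_three, of_apply, cons_val_zero, cons_val_one, cons_val_two,
    head_cons, tail_cons]
  ring

theorem quadrance_mul_quadrance_mul_quadrance_hcross (a b c : Fin 3 → F)
    (ha : hdot a a ≠ 0) (hb : hdot b b ≠ 0) (hc : hdot c c ≠ 0)
    (hca : hdot (hcross c a) (hcross c a) ≠ 0) (hab : hdot (hcross a b) (hcross a b) ≠ 0) :
    quadrance a c * quadrance a b * quadrance (hcross c a) (hcross a b) = quadrea a b c := by
  have hca' : hdot a c ^ 2 - hdot a a * hdot c c ≠ 0 := by
    rwa [hdot_hcross_hcross, hdot_comm c a, ← sq, mul_comm (hdot c c)] at hca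
  have hab' : hdot a b ^ 2 - hdot a a * hdot b b ≠ 0 := by
    rwa [hdot_hcross_hcross, hdot_comm b a, ← sq] at hab
  rw [quadrance, quadrance, quadrance, quadrea, neg_det_sq_eq_gram_det, hdot_hcross_hcross,
    hdot_hcross_hcross, hdot_hcross_hcross, hdot_comm c a, hdot_comm b a, hdot_comm c b]
  field_simp
  ring

theorem quadrea_theorem (a b c : Fin 3 → F)
    (ha : hdot a a ≠ 0) (hb : hdot b b ≠ 0) (hc : hdot c c ≠ 0)
    (hbc : hdot (hcross b c) (hcross b c) ≠ 0) (hca : hdot (hcross c a) (hcross c a) ≠ 0)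
    (hab : hdot (hcross a b) (hcross a b) ≠ 0) :
    quadrance a c * quadrance a b * quadrance (hcross c a) (hcross a b) = quadrea a b c ∧
      quadrance b c * quadrance a b * quadrance (hcross b c) (hcross a b) = quadrea a b c ∧
      quadrance b c * quadrance a c * quadrance (hcross b c) (hcross c a) = quadrea a b c := by
  refine ⟨quadrance_mul_quadrance_mul_quadrance_hcross a b c ha hb hc hca hab, ?_, ?_⟩
  · rw [← quadrea_rotate, ← quadrance_mul_quadrance_mul_quadrance_hcross b c a hb hc ha hab hbc,
      quadrance_comm b a, quadrance_comm (hcross a b), mul_comm (quadrance a b)]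
  · rw [← quadrea_rotate, ← quadrea_rotate,
      ← quadrance_mul_quadrance_mul_quadrance_hcross c a b hc ha hb hbc hca,
      quadrance_comm c b, quadrance_comm c a]

theorem spread_law_of_quadrea {q₁ q₂ q₃ S₁ S₂ S₃ A : F} (h₁ : q₂ * q₃ * S₁ = A)
    (h₂ : q₁ * q₃ * S₂ = A) (h₃ : q₁ * q₂ * S₃ = A) (hq₁ : q₁ ≠ 0) (hq₂ : q₂ ≠ 0) (hq₃ : q₃ ≠ 0) :
    S₁ / q₁ = S₂ / q₂ ∧ S₂ / q₂ = S₃ / q₃ := by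
  rw [div_eq_div_iff hq₁ hq₂, div_eq_div_iff hq₂ hq₃]
  exact ⟨mul_left_cancel₀ hq₃ (by linear_combination h₁ - h₂),
    mul_left_cancel₀ hq₁ (by linear_combination h₂ - h₃)⟩

end Hyperbolic

open Hyperbolic

theorem quadrea_and_spread_law_general {F : Type*} [Field F]
    (x1 y1 z1 x2 y2 z2 x3 y3 z3 : F)
    (h1 : x1^2 + y1^2 - z1^2 ≠ 0) (h2 : x2^2 + y2^2 - z2^2 ≠ 0) (h3 : x3^2 + y3^2 - z3^2 ≠ 0)
    -- coordinates of the three joins (hyperbolic cross products)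
    (l1 m1 n1 l2 m2 n2 l3 m3 n3 : F)
    (hL1 : l1 = y2*z3 - y3*z2 ∧ m1 = z2*x3 - z3*x2 ∧ n1 = x3*y2 - x2*y3)
    (hL2 : l2 = y3*z1 - y1*z3 ∧ m2 = z3*x1 - z1*x3 ∧ n2 = x1*y3 - x3*y1)
    (hL3 : l3 = y1*z2 - y2*z1 ∧ m3 = z1*x2 - z2*x1 ∧ n3 = x2*y1 - x1*y2)
    -- the joins are non-null lines
    (hn1 : l1^2 + m1^2 - n1^2 ≠ 0) (hn2 : l2^2 + m2^2 - n2^2 ≠ 0) (hn3 : l3^2 + m3^2 - n3^2 ≠ 0)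
    (q1 q2 q3 S1 S2 S3 A : F)
    (hq1 : q1 = 1 - (x2*x3 + y2*y3 - z2*z3)^2 / ((x2^2 + y2^2 - z2^2) * (x3^2 + y3^2 - z3^2)))
    (hq2 : q2 = 1 - (x1*x3 + y1*y3 - z1*z3)^2 / ((x1^2 + y1^2 - z1^2) * (x3^2 + y3^2 - z3^2)))
    (hq3 : q3 = 1 - (x1*x2 + y1*y2 - z1*z2)^2 / ((x1^2 + y1^2 - z1^2) * (x2^2 + y2^2 - z2^2)))
    (hS1 : S1 = 1 - (l2*l3 + m2*m3 - n2*n3)^2 / ((l2^2 + m2^2 - n2^2) * (l3^2 + m3^2 - n3^2)))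
    (hS2 : S2 = 1 - (l1*l3 + m1*m3 - n1*n3)^2 / ((l1^2 + m1^2 - n1^2) * (l3^2 + m3^2 - n3^2)))
    (hS3 : S3 = 1 - (l1*l2 + m1*m2 - n1*n2)^2 / ((l1^2 + m1^2 - n1^2) * (l2^2 + m2^2 - n2^2)))
    (hA : A = -(x1*y2*z3 - x1*y3*z2 + x2*y3*z1 - x3*y2*z1 + x3*y1*z2 - x2*y1*z3)^2 /
      ((x1^2 + y1^2 - z1^2) * (x2^2 + y2^2 - z2^2) * (x3^2 + y3^2 - z3^2))) :
    q2*q3*S1 = A ∧ q1*q3*S2 = A ∧ q1*q2*S3 = A ∧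
      (q1 ≠ 0 → q2 ≠ 0 → q3 ≠ 0 → S1/q1 = S2/q2 ∧ S2/q2 = S3/q3) := by
  obtain ⟨rfl, rfl, rfl⟩ := hL1
  obtain ⟨rfl, rfl, rfl⟩ := hL2
  obtain ⟨rfl, rfl, rfl⟩ := hL3
  set a : Fin 3 → F := ![x1, y1, z1]
  set b : Fin 3 → F := ![x2, y2, z2]
  set c : Fin 3 → F := ![x3, y3, z3]
  have ha : hdot a a ≠ 0 := by simpa only [a, hdot_vec3, sq] using h1
  have hb : hdot b b ≠ 0 := by simpa only [b, hdot_vec3, sq] using h2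
  have hc : hdot c c ≠ 0 := by simpa only [c, hdot_vec3, sq] using h3
  have hbc : hdot (hcross b c) (hcross b c) ≠ 0 := by
    simpa only [b, c, hcross_vec3, hdot_vec3, sq] using hn1
  have hca : hdot (hcross c a) (hcross c a) ≠ 0 := by
    simpa only [c, a, hcross_vec3, hdot_vec3, sq] using hn2
  have hab : hdot (hcross a b) (hcross a b) ≠ 0 := by
    simpa only [a, b, hcross_vec3, hdot_vec3, sq] using hn3
  obtain rfl : q1 = quadrance b c := by simp only [hq1, quadrance, b, c, hdot_vec3, sq]
  obtain rfl : q2 = quadrance a c := by simp only [hq2, quadrance, a, c, hdot_vec3, sq]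
  obtain rfl : q3 = quadrance a b := by simp only [hq3, quadrance, a, b, hdot_vec3, sq]
  obtain rfl : S1 = quadrance (hcross c a) (hcross a b) := by
    simp only [hS1, quadrance, a, b, c, hcross_vec3, hdot_vec3, sq]
  obtain rfl : S2 = quadrance (hcross b c) (hcross a b) := by
    simp only [hS2, quadrance, a, b, c, hcross_vec3, hdot_vec3, sq]
  obtain rfl : S3 = quadrance (hcross b c) (hcross c a) := by
    simp only [hS3, quadrance, a, b, c, hcross_vec3, hdot_vec3, sq]
  obtain rfl : A = quadrea a b c := by
    rw [hA, quadrea, Matrix.det_fin_three]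
    simp only [a, b, c, hdot_vec3, Matrix.of_apply, Matrix.cons_val_zero, Matrix.cons_val_one,
      Matrix.cons_val_two, Matrix.head_cons, Matrix.tail_cons]
    ring
  obtain ⟨h₁, h₂, h₃⟩ := quadrea_theorem a b c ha hb hc hbc hca hab
  exact ⟨h₁, h₂, h₃, spread_law_of_quadrea h₁ h₂ h₃⟩

/-- Quadrea theorem and Spread law: q2 q3 S1 = q1 q3 S2 = q1 q2 S3 = A, hence
    S1/q1 = S2/q2 = S3/q3 when the quadrances are nonzero. -/
theorem quadrea_and_spread_law {F : Type*} [Field F] (hchar : (2 : F) ≠ 0)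
    (x1 y1 z1 x2 y2 z2 x3 y3 z3 : F)
    (h1 : x1^2 + y1^2 - z1^2 ≠ 0) (h2 : x2^2 + y2^2 - z2^2 ≠ 0) (h3 : x3^2 + y3^2 - z3^2 ≠ 0)
    -- coordinates of the three joins (hyperbolic cross products)
    (l1 m1 n1 l2 m2 n2 l3 m3 n3 : F)
    (hL1 : l1 = y2*z3 - y3*z2 ∧ m1 = z2*x3 - z3*x2 ∧ n1 = x3*y2 - x2*y3)
    (hL2 : l2 = y3*z1 - y1*z3 ∧ m2 = z3*x1 - z1*x3 ∧ n2 = x1*y3 - x3*y1)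
    (hL3 : l3 = y1*z2 - y2*z1 ∧ m3 = z1*x2 - z2*x1 ∧ n3 = x2*y1 - x1*y2)
    -- the joins are non-null lines
    (hn1 : l1^2 + m1^2 - n1^2 ≠ 0) (hn2 : l2^2 + m2^2 - n2^2 ≠ 0) (hn3 : l3^2 + m3^2 - n3^2 ≠ 0)
    (q1 q2 q3 S1 S2 S3 A : F)
    (hq1 : q1 = 1 - (x2*x3 + y2*y3 - z2*z3)^2 / ((x2^2 + y2^2 - z2^2) * (x3^2 + y3^2 - z3^2)))
    (hq2 : q2 = 1 - (x1*x3 + y1*y3 - z1*z3)^2 / ((x1^2 + y1^2 - z1^2) * (x3^2 + y3^2 - z3^2)))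
    (hq3 : q3 = 1 - (x1*x2 + y1*y2 - z1*z2)^2 / ((x1^2 + y1^2 - z1^2) * (x2^2 + y2^2 - z2^2)))
    (hS1 : S1 = 1 - (l2*l3 + m2*m3 - n2*n3)^2 / ((l2^2 + m2^2 - n2^2) * (l3^2 + m3^2 - n3^2)))
    (hS2 : S2 = 1 - (l1*l3 + m1*m3 - n1*n3)^2 / ((l1^2 + m1^2 - n1^2) * (l3^2 + m3^2 - n3^2)))
    (hS3 : S3 = 1 - (l1*l2 + m1*m2 - n1*n2)^2 / ((l1^2 + m1^2 - n1^2) * (l2^2 + m2^2 - n2^2)))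
    (hA : A = -(x1*y2*z3 - x1*y3*z2 + x2*y3*z1 - x3*y2*z1 + x3*y1*z2 - x2*y1*z3)^2 /
      ((x1^2 + y1^2 - z1^2) * (x2^2 + y2^2 - z2^2) * (x3^2 + y3^2 - z3^2))) :
    q2*q3*S1 = A ∧ q1*q3*S2 = A ∧ q1*q2*S3 = A ∧
      (q1 ≠ 0 → q2 ≠ 0 → q3 ≠ 0 → S1/q1 = S2/q2 ∧ S2/q2 = S3/q3) :=
  quadrea_and_spread_law_general x1 y1 z1 x2 y2 z2 x3 y3 z3 h1 h2 h3 l1 m1 n1 l2 m2 n2 l3 m3 n3 hL1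
    hL2 hL3 hn1 hn2 hn3 q1 q2 q3 S1 S2 S3 A hq1 hq2 hq3 hS1 hS2 hS3 hA
end

section
/- Let F be a field of characteristic not 2 and define S(a,b,c) = (a+b+c)^2 - 2(a^2+b^2+c^2) - 4abc. If q1 = 4p1(1-p1), q2 = 4p2(1-p2), q3 = 4p3(1-p3), then S(q1,q2,q3) = -16 * S(p1,p2,p3) * S(1-p1,1-p2,1-p3). In particular S(q1,q2,q3) = 0 if and only if S(p1,p2,p3)=0 or S(1-p1,1-p2,1-p3)=0 (in a field with no zero divisors and 2 ≠ 0). -/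
/-- Triple quad mid theorem: S(q1,q2,q3) = -16 S(p1,p2,p3) S(1-p1,1-p2,1-p3)
    when qi = 4 pi (1-pi). -/
theorem triple_quad_mid {F : Type*} [Field F] (hchar : (2 : F) ≠ 0)
    (p1 p2 p3 q1 q2 q3 : F)
    (hq1 : q1 = 4*p1*(1 - p1)) (hq2 : q2 = 4*p2*(1 - p2)) (hq3 : q3 = 4*p3*(1 - p3))
    (S : F → F → F → F)
    (hS : ∀ a b c : F, S a b c = (a + b + c)^2 - 2*(a^2 + b^2 + c^2) - 4*a*b*c) :
    S q1 q2 q3 = -16 * S p1 p2 p3 * S (1 - p1) (1 - p2) (1 - p3) ∧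
      (S q1 q2 q3 = 0 ↔ S p1 p2 p3 = 0 ∨ S (1 - p1) (1 - p2) (1 - p3) = 0) := by
  have key : S q1 q2 q3 = -16 * S p1 p2 p3 * S (1 - p1) (1 - p2) (1 - p3) := by
    simp only [hS, hq1, hq2, hq3]; ring
  refine ⟨key, ?_⟩
  rw [key]
  have h16 : (-16 : F) ≠ 0 := by
    intro h
    apply hchar
    have : (16 : F) = 2^4 := by norm_num
    have h16' : (16 : F) = 0 := by
      have := neg_eq_zero.mp h; exact_mod_cast this
    rw [this] at h16'
    exact pow_eq_zero_iff (by norm_num) |>.mp h16'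
  constructor
  · intro h
    rcases mul_eq_zero.mp h with h' | h'
    · rcases mul_eq_zero.mp h' with h'' | h''
      · exact absurd h'' h16
      · exact Or.inl h''
    · exact Or.inr h'
  · rintro (h | h) <;> simp [h]
end

section
/- Let F be a field of characteristic not 2 with q1 = 4p1(1-p1), q2 = 4p2(1-p2), q3 = 4p3(1-p3) and let A be any element of F. Then (A - q1 - q2 - q3 + 2)^2 - 4(1-q1)(1-q2)(1-q3) = (A - 4S(p1,p2,p3))(A - 4S(1-p1,1-p2,1-p3)), where S(a,b,c) = (a+b+c)^2 - 2(a^2+b^2+c^2) - 4abc. -/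
/-- Cross mid theorem: the Cross function factors into two linear factors when the
    quadrances are doubled quantities. -/
theorem cross_mid {F : Type*} [Field F] (hchar : (2 : F) ≠ 0)
    (p1 p2 p3 q1 q2 q3 A : F)
    (hq1 : q1 = 4*p1*(1 - p1)) (hq2 : q2 = 4*p2*(1 - p2)) (hq3 : q3 = 4*p3*(1 - p3))
    (S : F → F → F → F)
    (hS : ∀ a b c : F, S a b c = (a + b + c)^2 - 2*(a^2 + b^2 + c^2) - 4*a*b*c) :
    (A - q1 - q2 - q3 + 2)^2 - 4*(1 - q1)*(1 - q2)*(1 - q3) =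
      (A - 4 * S p1 p2 p3) * (A - 4 * S (1 - p1) (1 - p2) (1 - p3)) := by
  subst hq1 hq2 hq3; rw [hS, hS]; ring
end

section
/- Let F be a field of characteristic not 2. Define the spread polynomials recursively: S_0(x)=0, S_1(x)=x, S_n(x) = 2(1-2x)S_{n-1}(x) - S_{n-2}(x) + 2x. Then for every x in F and every n ≥ 1, the Triple spread function vanishes on consecutive values: S(x, S_{n-1}(x), S_n(x)) = 0, where S(a,b,c) = (a+b+c)^2 - 2(a^2+b^2+c^2) - 4abc. -/
/-- The spread polynomials, defined recursively. -/
def spreadPoly {F : Type*} [Field F] : ℕ → F → F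
  | 0, _ => 0
  | 1, x => x
  | (n + 2), x => 2*(1 - 2*x) * spreadPoly (n + 1) x - spreadPoly n x + 2*x

lemma spreads_aux {F : Type*} [Field F] (x : F) (n : ℕ) :
    (x + spreadPoly n x + spreadPoly (n + 1) x)^2
      - 2*(x^2 + (spreadPoly n x)^2 + (spreadPoly (n + 1) x)^2)
      - 4*x*(spreadPoly n x)*(spreadPoly (n + 1) x) = 0 := by
  induction n with
  | zero => simp [spreadPoly]; ring
  | succ m ih =>
    have h : spreadPoly (m + 2) x
        = 2*(1 - 2*x) * spreadPoly (m + 1) x - spreadPoly m x + 2*x := rfl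
    rw [h]
    linear_combination ih

/-- Recursive spreads theorem: S(x, S_{n-1}(x), S_n(x)) = 0 for all n ≥ 1. -/
theorem recursive_spreads {F : Type*} [Field F] (hchar : (2 : F) ≠ 0)
    (x : F) (n : ℕ) (hn : 1 ≤ n) :
    (x + spreadPoly (n - 1) x + spreadPoly n x)^2
      - 2*(x^2 + (spreadPoly (n - 1) x)^2 + (spreadPoly n x)^2)
      - 4*x*(spreadPoly (n - 1) x)*(spreadPoly n x) = 0 := by
  obtain ⟨m, rfl⟩ := Nat.exists_eq_add_of_le hn
  rw [Nat.add_comm 1 m]; simpa using spreads_aux x m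
end

section
/- Let F be a field of characteristic not 2 and S, q in F satisfying the equilateral relation (1-Sq)^2 = 4(1-S)(1-q). Suppose S = 4R(1-R) and q = 4p(1-p). Then (1-Sq)^2 - 4(1-S)(1-q) = (4Rp-1)(4R(1-p)-1)(4p(1-R)-1)(4(1-R)(1-p)-1); hence the equilateral relation holds if and only if 4Rp=1, or 4R(1-p)=1, or 4p(1-R)=1, or 4(1-R)(1-p)=1. -/
/-- Equilateral mid theorem: the equilateral relation factors into four linear conditions
    when S and q are doubled quantities. -/
theorem equilateral_mid {F : Type*} [Field F] (hchar : (2 : F) ≠ 0)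
    (R p S q : F) (hS : S = 4*R*(1 - R)) (hq : q = 4*p*(1 - p)) :
    (1 - S*q)^2 - 4*(1 - S)*(1 - q) =
      (4*R*p - 1) * (4*R*(1 - p) - 1) * (4*p*(1 - R) - 1) * (4*(1 - R)*(1 - p) - 1) ∧
    ((1 - S*q)^2 = 4*(1 - S)*(1 - q) ↔
      4*R*p = 1 ∨ 4*R*(1 - p) = 1 ∨ 4*p*(1 - R) = 1 ∨ 4*(1 - R)*(1 - p) = 1) := by
  subst hS hq
  have hfac : (1 - 4*R*(1 - R)*(4*p*(1 - p)))^2 - 4*(1 - 4*R*(1 - R))*(1 - 4*p*(1 - p)) =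
      (4*R*p - 1) * (4*R*(1 - p) - 1) * (4*p*(1 - R) - 1) * (4*(1 - R)*(1 - p) - 1) := by
    ring
  refine ⟨hfac, ?_⟩
  rw [← sub_eq_zero, hfac]
  constructor
  · intro h
    rcases mul_eq_zero.mp h with h | h
    · rcases mul_eq_zero.mp h with h | h
      · rcases mul_eq_zero.mp h with h | h
        · exact Or.inl (by linear_combination h)
        · exact Or.inr (Or.inl (by linear_combination h))
      · exact Or.inr (Or.inr (Or.inl (by linear_combination h)))
    · exact Or.inr (Or.inr (Or.inr (by linear_combination h)))
  · rintro (h | h | h | h) <;> rw [show (0:F) = 0*0*0*0 by ring] <;>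
      · simp [sub_eq_zero, h]
end

section
/- Let F be a field of characteristic not 2 and let a1=[x1:y1:z1], a2=[x2:y2:z2] be distinct non-null points normalized so that x1^2+y1^2-z1^2 = x2^2+y2^2-z2^2 ≠ 0. Then the points m1 = [x1+x2 : y1+y2 : z1+z2] and m2 = [x1-x2 : y1-y2 : z1-z2] are distinct, both lie on the join a1a2, both satisfy q(a1,m)=q(a2,m), and m1 is perpendicular to m2, i.e., (x1+x2)(x1-x2)+(y1+y2)(y1-y2)-(z1+z2)(z1-z2)=0. -/
/-- Midpoints theorem: with normalized coordinates, m1 = a1 + a2 and m2 = a1 - a2 are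
    distinct midpoints of the side, and they are perpendicular. -/
theorem midpoints {F : Type*} [Field F] (hchar : (2 : F) ≠ 0)
    (x1 y1 z1 x2 y2 z2 : F)
    (h1 : x1^2 + y1^2 - z1^2 ≠ 0) (h2 : x2^2 + y2^2 - z2^2 ≠ 0)
    (hnorm : x1^2 + y1^2 - z1^2 = x2^2 + y2^2 - z2^2)
    (hdist : ¬(x1*y2 - x2*y1 = 0 ∧ y1*z2 - y2*z1 = 0 ∧ z1*x2 - z2*x1 = 0))
    (hm1 : (x1 + x2)^2 + (y1 + y2)^2 - (z1 + z2)^2 ≠ 0)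
    (hm2 : (x1 - x2)^2 + (y1 - y2)^2 - (z1 - z2)^2 ≠ 0) :
    -- m1 and m2 are (projectively) distinct
    ¬((x1 + x2)*(y1 - y2) - (x1 - x2)*(y1 + y2) = 0 ∧
      (y1 + y2)*(z1 - z2) - (y1 - y2)*(z1 + z2) = 0 ∧
      (z1 + z2)*(x1 - x2) - (z1 - z2)*(x1 + x2) = 0) ∧
    -- m1 lies on the join a1a2
    x1*y2*(z1 + z2) - x1*(y1 + y2)*z2 + x2*(y1 + y2)*z1
      - (x1 + x2)*y2*z1 + (x1 + x2)*y1*z2 - x2*y1*(z1 + z2) = 0 ∧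
    -- m2 lies on the join a1a2
    x1*y2*(z1 - z2) - x1*(y1 - y2)*z2 + x2*(y1 - y2)*z1
      - (x1 - x2)*y2*z1 + (x1 - x2)*y1*z2 - x2*y1*(z1 - z2) = 0 ∧
    -- q(a1, m1) = q(a2, m1)
    (1 - (x1*(x1 + x2) + y1*(y1 + y2) - z1*(z1 + z2))^2 /
        ((x1^2 + y1^2 - z1^2) * ((x1 + x2)^2 + (y1 + y2)^2 - (z1 + z2)^2))
      = 1 - (x2*(x1 + x2) + y2*(y1 + y2) - z2*(z1 + z2))^2 /
        ((x2^2 + y2^2 - z2^2) * ((x1 + x2)^2 + (y1 + y2)^2 - (z1 + z2)^2))) ∧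
    -- q(a1, m2) = q(a2, m2)
    (1 - (x1*(x1 - x2) + y1*(y1 - y2) - z1*(z1 - z2))^2 /
        ((x1^2 + y1^2 - z1^2) * ((x1 - x2)^2 + (y1 - y2)^2 - (z1 - z2)^2))
      = 1 - (x2*(x1 - x2) + y2*(y1 - y2) - z2*(z1 - z2))^2 /
        ((x2^2 + y2^2 - z2^2) * ((x1 - x2)^2 + (y1 - y2)^2 - (z1 - z2)^2))) ∧
    -- m1 ⊥ m2
    (x1 + x2)*(x1 - x2) + (y1 + y2)*(y1 - y2) - (z1 + z2)*(z1 - z2) = 0 := by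
  refine ⟨?_, by ring, by ring, ?_, ?_, by linear_combination hnorm⟩
  · rintro ⟨ha, hb, hc⟩
    apply hdist
    refine ⟨mul_left_cancel₀ hchar ?_, mul_left_cancel₀ hchar ?_, mul_left_cancel₀ hchar ?_⟩
    · linear_combination -ha
    · linear_combination -hb
    · linear_combination -hc
  · have e1 : x1*(x1 + x2) + y1*(y1 + y2) - z1*(z1 + z2)
        = x2*(x1 + x2) + y2*(y1 + y2) - z2*(z1 + z2) := by linear_combination hnorm
    rw [e1, hnorm]
  · have e2 : (x1*(x1 - x2) + y1*(y1 - y2) - z1*(z1 - z2))^2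
        = (x2*(x1 - x2) + y2*(y1 - y2) - z2*(z1 - z2))^2 := by
      linear_combination ((x1*(x1 - x2) + y1*(y1 - y2) - z1*(z1 - z2))
        - (x2*(x1 - x2) + y2*(y1 - y2) - z2*(z1 - z2))) * hnorm
    rw [e2, hnorm]
end

section
/- Let F be a field of characteristic not 2 and let t1,u1,t2,u2,t3,u3 in F define three distinct null points (the pairwise differences tiuj - tjui are nonzero). Let L1, L2, L3 be the joins of the pairs, with coordinate vectors w1=(t2t3-u2u3, t2u3+t3u2, t2t3+u2u3), w2=(t1t3-u1u3, t1u3+t3u1, t1t3+u1u3), w3=(t1t2-u1u2, t1u2+t2u1, t1t2+u1u2). Then the quadreal L = -det(w1,w2,w3)^2 / ((w1·w1)(w2·w2)(w3·w3)) equals -4, where w·w = l^2+m^2-n^2 for w=(l,m,n). -/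
/-- Triply nil quadreal theorem: the quadreal of a triply nil triangle is -4. -/
theorem triply_nil_quadreal {F : Type*} [Field F] (hchar : (2 : F) ≠ 0)
    (t1 u1 t2 u2 t3 u3 : F)
    (h12 : t1*u2 - t2*u1 ≠ 0) (h23 : t2*u3 - t3*u2 ≠ 0) (h13 : t1*u3 - t3*u1 ≠ 0)
    (l1 m1 n1 l2 m2 n2 l3 m3 n3 : F)
    (hw1 : l1 = t2*t3 - u2*u3 ∧ m1 = t2*u3 + t3*u2 ∧ n1 = t2*t3 + u2*u3)
    (hw2 : l2 = t1*t3 - u1*u3 ∧ m2 = t1*u3 + t3*u1 ∧ n2 = t1*t3 + u1*u3)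
    (hw3 : l3 = t1*t2 - u1*u2 ∧ m3 = t1*u2 + t2*u1 ∧ n3 = t1*t2 + u1*u2) :
    -(l1*m2*n3 - l1*m3*n2 + l2*m3*n1 - l3*m2*n1 + l3*m1*n2 - l2*m1*n3)^2 /
      ((l1^2 + m1^2 - n1^2) * (l2^2 + m2^2 - n2^2) * (l3^2 + m3^2 - n3^2)) = -4 := by
  obtain ⟨h1, h2, h3⟩ := hw1
  obtain ⟨h4, h5, h6⟩ := hw2
  obtain ⟨h7, h8, h9⟩ := hw3
  subst h1 h2 h3 h4 h5 h6 h7 h8 h9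
  have e1 : (t2*t3 - u2*u3)^2 + (t2*u3 + t3*u2)^2 - (t2*t3 + u2*u3)^2
      = (t2*u3 - t3*u2)^2 := by ring
  have e2 : (t1*t3 - u1*u3)^2 + (t1*u3 + t3*u1)^2 - (t1*t3 + u1*u3)^2
      = (t1*u3 - t3*u1)^2 := by ring
  have e3 : (t1*t2 - u1*u2)^2 + (t1*u2 + t2*u1)^2 - (t1*t2 + u1*u2)^2
      = (t1*u2 - t2*u1)^2 := by ring
  rw [e1, e2, e3]
  have hd : (t2*u3 - t3*u2)^2 * (t1*u3 - t3*u1)^2 * (t1*u2 - t2*u1)^2 ≠ 0 := by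
    exact mul_ne_zero (mul_ne_zero (pow_ne_zero _ h23) (pow_ne_zero _ h13)) (pow_ne_zero _ h12)
  rw [div_eq_iff hd]
  ring
end

section
/- Let F be a field of characteristic not 2 and let t1,u1,t2,u2,t3,u3,t4,u4 in F define four distinct null points αi = α(ti:ui) (all pairwise tiuj - tjui nonzero, and such that the three diagonal spreads below are defined). Let P, R, T be the spreads between the pairs of opposite joins: P = S(α1α2, α3α4), R = S(α1α3, α2α4), T = S(α1α4, α2α3), where the join of α(ti:ui), α(tj:uj) has coordinates (titj-uiuj, tiuj+tjui, titj+uiuj) and the spread between lines with coordinate vectors w, w' is S = 1 - (w·w')^2/((w·w)(w'·w')) with (l,m,n)·(l',m',n') = ll'+mm'-nn'. Then PR + RT + TP = 48 and PRT = 64. -/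
lemma aux_forty_eight {F : Type*} [Field F] (A C P R T : F)
    (hA : A ≠ 0) (hC : C ≠ 0) (hB : A + C ≠ 0)
    (hP : P = -4*(A+C)*C/A^2) (hR : R = 4*C*A/(A+C)^2) (hT : T = -4*A*(A+C)/C^2) :
    P*R + R*T + T*P = 48 ∧ P*R*T = 64 := by
  have hA2 : A^2 ≠ 0 := pow_ne_zero 2 hA
  have hB2 : (A+C)^2 ≠ 0 := pow_ne_zero 2 hB
  have hC2 : C^2 ≠ 0 := pow_ne_zero 2 hC
  constructor
  · rw [hP, hR, hT, div_mul_div_comm, div_mul_div_comm, div_mul_div_comm,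
      div_add_div _ _ (mul_ne_zero hA2 hB2) (mul_ne_zero hB2 hC2),
      div_add_div _ _ (mul_ne_zero (mul_ne_zero hA2 hB2) (mul_ne_zero hB2 hC2))
        (mul_ne_zero hC2 hA2),
      div_eq_iff (mul_ne_zero (mul_ne_zero (mul_ne_zero hA2 hB2) (mul_ne_zero hB2 hC2))
        (mul_ne_zero hC2 hA2))]
    ring
  · rw [hP, hR, hT, div_mul_div_comm, div_mul_div_comm,
      div_eq_iff (mul_ne_zero (mul_ne_zero hA2 hB2) hC2)]
    ring

/-- The 48/64 theorem: the three diagonal spreads P, R, T of a fully nil quadrangle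
    satisfy PR + RT + TP = 48 and PRT = 64. -/
theorem forty_eight_sixty_four {F : Type*} [Field F] (hchar : (2 : F) ≠ 0)
    (t1 u1 t2 u2 t3 u3 t4 u4 : F)
    (h12 : t1*u2 - t2*u1 ≠ 0) (h13 : t1*u3 - t3*u1 ≠ 0) (h14 : t1*u4 - t4*u1 ≠ 0)
    (h23 : t2*u3 - t3*u2 ≠ 0) (h24 : t2*u4 - t4*u2 ≠ 0) (h34 : t3*u4 - t4*u3 ≠ 0)
    (P R T : F)
    (hP : P = 1 - ((t1*t2 - u1*u2)*(t3*t4 - u3*u4) + (t1*u2 + t2*u1)*(t3*u4 + t4*u3)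
        - (t1*t2 + u1*u2)*(t3*t4 + u3*u4))^2 /
      (((t1*t2 - u1*u2)^2 + (t1*u2 + t2*u1)^2 - (t1*t2 + u1*u2)^2) *
       ((t3*t4 - u3*u4)^2 + (t3*u4 + t4*u3)^2 - (t3*t4 + u3*u4)^2)))
    (hR : R = 1 - ((t1*t3 - u1*u3)*(t2*t4 - u2*u4) + (t1*u3 + t3*u1)*(t2*u4 + t4*u2)
        - (t1*t3 + u1*u3)*(t2*t4 + u2*u4))^2 /
      (((t1*t3 - u1*u3)^2 + (t1*u3 + t3*u1)^2 - (t1*t3 + u1*u3)^2) *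
       ((t2*t4 - u2*u4)^2 + (t2*u4 + t4*u2)^2 - (t2*t4 + u2*u4)^2)))
    (hT : T = 1 - ((t1*t4 - u1*u4)*(t2*t3 - u2*u3) + (t1*u4 + t4*u1)*(t2*u3 + t3*u2)
        - (t1*t4 + u1*u4)*(t2*t3 + u2*u3))^2 /
      (((t1*t4 - u1*u4)^2 + (t1*u4 + t4*u1)^2 - (t1*t4 + u1*u4)^2) *
       ((t2*t3 - u2*u3)^2 + (t2*u3 + t3*u2)^2 - (t2*t3 + u2*u3)^2))) :
    P*R + R*T + T*P = 48 ∧ P*R*T = 64 := by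
  have hP' : P = -4*((t1*u3-t3*u1)*(t2*u4-t4*u2))*((t1*u4-t4*u1)*(t2*u3-t3*u2)) /
      (((t1*u2-t2*u1)*(t3*u4-t4*u3))^2) := by
    rw [hP,
      show ((t1*t2 - u1*u2)^2 + (t1*u2 + t2*u1)^2 - (t1*t2 + u1*u2)^2) = (t1*u2-t2*u1)^2 from by ring,
      show ((t3*t4 - u3*u4)^2 + (t3*u4 + t4*u3)^2 - (t3*t4 + u3*u4)^2) = (t3*u4-t4*u3)^2 from by ring]
    field_simp
    ring
  have hR' : R = 4*((t1*u2-t2*u1)*(t3*u4-t4*u3))*((t1*u4-t4*u1)*(t2*u3-t3*u2)) /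
      (((t1*u3-t3*u1)*(t2*u4-t4*u2))^2) := by
    rw [hR,
      show ((t1*t3 - u1*u3)^2 + (t1*u3 + t3*u1)^2 - (t1*t3 + u1*u3)^2) = (t1*u3-t3*u1)^2 from by ring,
      show ((t2*t4 - u2*u4)^2 + (t2*u4 + t4*u2)^2 - (t2*t4 + u2*u4)^2) = (t2*u4-t4*u2)^2 from by ring]
    field_simp
    ring
  have hT' : T = -4*((t1*u2-t2*u1)*(t3*u4-t4*u3))*((t1*u3-t3*u1)*(t2*u4-t4*u2)) /
      (((t1*u4-t4*u1)*(t2*u3-t3*u2))^2) := by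
    rw [hT,
      show ((t1*t4 - u1*u4)^2 + (t1*u4 + t4*u1)^2 - (t1*t4 + u1*u4)^2) = (t1*u4-t4*u1)^2 from by ring,
      show ((t2*t3 - u2*u3)^2 + (t2*u3 + t3*u2)^2 - (t2*t3 + u2*u3)^2) = (t2*u3-t3*u2)^2 from by ring]
    field_simp
    ring
  refine aux_forty_eight ((t1*u2-t2*u1)*(t3*u4-t4*u3)) ((t1*u4-t4*u1)*(t2*u3-t3*u2)) P R T
    (mul_ne_zero h12 h34) (mul_ne_zero h14 h23) ?_ ?_ ?_ ?_
  · rw [show (t1*u2-t2*u1)*(t3*u4-t4*u3) + (t1*u4-t4*u1)*(t2*u3-t3*u2)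
        = (t1*u3-t3*u1)*(t2*u4-t4*u2) from by ring]
    exact mul_ne_zero h13 h24
  · rw [hP']; ring
  · rw [hR']; ring
  · rw [hT']; ring
end

section
/- Let F be a field of characteristic not 2. Let α1 = α(t1:u1), α2 = α(t2:u2), α3 = α(t3:u3) be distinct null points, L the join of α1 and α2, and M = (l:m:n) a line with M distinct from the joins α1α3 and α2α3 and such that all denominators below are nonzero. Let a1 be the meet of α1α3 with M and a2 the meet of α2α3 with M. Then q(a1,a2) · S(L,M) = 1, where q is the quadrance between points and S the spread between lines. Explicitly, q(a1,a2) = -(t1u2-t2u1)^2(l^2+m^2-n^2) / ((l(t1^2-u1^2)+2mt1u1-n(t1^2+u1^2))(l(t2^2-u2^2)+2mt2u2-n(t2^2+u2^2))) and S(L,M) is its reciprocal. -/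
/-!
Write `x · y` for `hdot`, `x × y` for `hcross`, `j_ik` for the join of `α_i` and `α_k`, and
`a_i = j_i3 × M`. For the join `j` of two null points `α`, `β` one has
`(j · M)² - (j · j)(M · M) = (α · M)(β · M)`; with the Lagrange identity for `×` this gives
`a_i · a_i = (α_i · M)(α₃ · M)`, and it gives `S(L, M)` directly. Again by the Lagrange identity,
`(a₁ · a₁)(a₂ · a₂) - (a₁ · a₂)² = -(a₁ × a₂) · (a₁ × a₂)`; since `a₁`, `a₂` lie on `M` while
`j₁₃`, `j₂₃` meet at `α₃`, `a₁ × a₂` is `M` scaled by `(j₁₃ × j₂₃) · M = (t₂u₁ - t₁u₂)(α₃ · M)`.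
The factor `(α₃ · M)²` then cancels in `q(a₁, a₂)`.
-/

namespace HyperbolicPlane

variable {R : Type*} [CommRing R]

def hdot (x y : Fin 3 → R) : R := x 0 * y 0 + x 1 * y 1 - x 2 * y 2

-- `J (x ×₃ y)` with `J = diag(1, 1, -1)`: both the join of two points and the meet of two lines.
def hcross (x y : Fin 3 → R) : Fin 3 → R :=
  ![x 1 * y 2 - y 1 * x 2, x 2 * y 0 - y 2 * x 0, y 0 * x 1 - x 0 * y 1]

def nullPoint (t u : R) : Fin 3 → R := ![t ^ 2 - u ^ 2, 2 * t * u, t ^ 2 + u ^ 2]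

def joinNull (t₁ u₁ t₂ u₂ : R) : Fin 3 → R :=
  ![t₁ * t₂ - u₁ * u₂, t₁ * u₂ + t₂ * u₁, t₁ * t₂ + u₁ * u₂]

theorem hdot_comm (x y : Fin 3 → R) : hdot x y = hdot y x := by
  simp only [hdot]; ring

theorem hdot_self (x : Fin 3 → R) : hdot x x = x 0 ^ 2 + x 1 ^ 2 - x 2 ^ 2 := by
  simp only [hdot]; ring

theorem hdot_smul_left (a : R) (x y : Fin 3 → R) : hdot (a • x) y = a * hdot x y := by
  simp only [hdot, Pi.smul_apply, smul_eq_mul]; ring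

theorem hdot_smul_right (a : R) (x y : Fin 3 → R) : hdot x (a • y) = a * hdot x y := by
  rw [hdot_comm, hdot_smul_left, hdot_comm]

theorem hdot_hcross_hcross (a b c d : Fin 3 → R) :
    hdot (hcross a b) (hcross c d) = hdot a d * hdot b c - hdot a c * hdot b d := by
  simp only [hdot, hcross, Matrix.cons_val_zero, Matrix.cons_val_one, Matrix.cons_val]; ring

theorem hdot_hcross_self (x y : Fin 3 → R) :
    hdot (hcross x y) (hcross x y) = hdot x y ^ 2 - hdot x x * hdot y y := by
  rw [hdot_hcross_hcross, hdot_comm y x]; ring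

theorem hcross_hcross_common_right (a c M : Fin 3 → R) :
    hcross (hcross a M) (hcross c M) = -hdot (hcross a c) M • M := by
  ext i
  fin_cases i <;>
    simp only [hdot, hcross, Pi.smul_apply, smul_eq_mul, Fin.zero_eta, Fin.mk_one, Fin.reduceFinMk,
      Matrix.cons_val_zero, Matrix.cons_val_one, Matrix.cons_val] <;> ring

theorem hdot_joinNull_self (t₁ u₁ t₂ u₂ : R) :
    hdot (joinNull t₁ u₁ t₂ u₂) (joinNull t₁ u₁ t₂ u₂) = (t₁ * u₂ - t₂ * u₁) ^ 2 := by
  simp only [hdot, joinNull, Matrix.cons_val_zero, Matrix.cons_val_one, Matrix.cons_val]; ring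

theorem hdot_joinNull_sq_sub (t₁ u₁ t₂ u₂ : R) (M : Fin 3 → R) :
    hdot (joinNull t₁ u₁ t₂ u₂) M ^ 2
        - hdot (joinNull t₁ u₁ t₂ u₂) (joinNull t₁ u₁ t₂ u₂) * hdot M M
      = hdot (nullPoint t₁ u₁) M * hdot (nullPoint t₂ u₂) M := by
  simp only [hdot, joinNull, nullPoint, Matrix.cons_val_zero, Matrix.cons_val_one, Matrix.cons_val]
  ring

theorem hcross_joinNull_joinNull (t₁ u₁ t₂ u₂ t₃ u₃ : R) :
    hcross (joinNull t₁ u₁ t₃ u₃) (joinNull t₂ u₂ t₃ u₃)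
      = (t₂ * u₁ - t₁ * u₂) • nullPoint t₃ u₃ := by
  ext i
  fin_cases i <;>
    simp only [hcross, joinNull, nullPoint, Pi.smul_apply, smul_eq_mul, Fin.zero_eta, Fin.mk_one,
      Fin.reduceFinMk, Matrix.cons_val_zero, Matrix.cons_val_one, Matrix.cons_val] <;> ring

theorem hdot_self_hcross_joinNull (t₁ u₁ t₂ u₂ : R) (M : Fin 3 → R) :
    hdot (hcross (joinNull t₁ u₁ t₂ u₂) M) (hcross (joinNull t₁ u₁ t₂ u₂) M)
      = hdot (nullPoint t₁ u₁) M * hdot (nullPoint t₂ u₂) M := by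
  rw [hdot_hcross_self, hdot_joinNull_sq_sub]

theorem hdot_mul_hdot_sub_sq_hcross_joinNull (t₁ u₁ t₂ u₂ t₃ u₃ : R) (M : Fin 3 → R) :
    let a₁ := hcross (joinNull t₁ u₁ t₃ u₃) M
    let a₂ := hcross (joinNull t₂ u₂ t₃ u₃) M
    hdot a₁ a₁ * hdot a₂ a₂ - hdot a₁ a₂ ^ 2
      = -((t₁ * u₂ - t₂ * u₁) ^ 2 * hdot M M * hdot (nullPoint t₃ u₃) M ^ 2) := by
  intro a₁ a₂
  calc hdot a₁ a₁ * hdot a₂ a₂ - hdot a₁ a₂ ^ 2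
        = -hdot (hcross a₁ a₂) (hcross a₁ a₂) := by
        rw [hdot_hcross_self a₁ a₂]; ring
    _ = _ := by
        simp only [a₁, a₂, hcross_hcross_common_right, hcross_joinNull_joinNull, hdot_smul_left,
          hdot_smul_right]
        ring

variable {K : Type*} [Field K]

def quadrance (a b : Fin 3 → K) : K := 1 - hdot a b ^ 2 / (hdot a a * hdot b b)

-- Spreads of lines are quadrances of the dual points.
def spread (L M : Fin 3 → K) : K := quadrance L M

theorem quadrance_eq_div {a b : Fin 3 → K} (ha : hdot a a ≠ 0) (hb : hdot b b ≠ 0) :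
    quadrance a b = (hdot a a * hdot b b - hdot a b ^ 2) / (hdot a a * hdot b b) := by
  rw [quadrance, one_sub_div (mul_ne_zero ha hb)]

theorem quadrance_hcross_joinNull {t₁ u₁ t₂ u₂ t₃ u₃ : K} {M : Fin 3 → K}
    (h₁ : hdot (hcross (joinNull t₁ u₁ t₃ u₃) M) (hcross (joinNull t₁ u₁ t₃ u₃) M) ≠ 0)
    (h₂ : hdot (hcross (joinNull t₂ u₂ t₃ u₃) M) (hcross (joinNull t₂ u₂ t₃ u₃) M) ≠ 0) :
    quadrance (hcross (joinNull t₁ u₁ t₃ u₃) M) (hcross (joinNull t₂ u₂ t₃ u₃) M)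
      = -((t₁ * u₂ - t₂ * u₁) ^ 2 * hdot M M) /
          (hdot (nullPoint t₁ u₁) M * hdot (nullPoint t₂ u₂) M) := by
  rw [quadrance_eq_div h₁ h₂, hdot_mul_hdot_sub_sq_hcross_joinNull]
  simp only [hdot_self_hcross_joinNull] at h₁ h₂ ⊢
  have hD₁ := left_ne_zero_of_mul h₁
  have hD₂ := left_ne_zero_of_mul h₂
  have hD₃ := right_ne_zero_of_mul h₁
  field_simp

theorem spread_joinNull {t₁ u₁ t₂ u₂ : K} {M : Fin 3 → K} (h : t₁ * u₂ - t₂ * u₁ ≠ 0)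
    (hM : hdot M M ≠ 0) :
    spread (joinNull t₁ u₁ t₂ u₂) M
      = -(hdot (nullPoint t₁ u₁) M * hdot (nullPoint t₂ u₂) M) /
          ((t₁ * u₂ - t₂ * u₁) ^ 2 * hdot M M) := by
  have hL := hdot_joinNull_self t₁ u₁ t₂ u₂
  rw [spread, quadrance_eq_div (hL ▸ pow_ne_zero 2 h) hM, ← hdot_joinNull_sq_sub, hL]
  ring

end HyperbolicPlane

open HyperbolicPlane

theorem null_subtended_quadrance_general {F : Type*} [Field F]
    (t1 u1 t2 u2 t3 u3 l m n : F)
    (h12 : t1*u2 - t2*u1 ≠ 0)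
    (hM : l^2 + m^2 - n^2 ≠ 0)
    -- a1 = meet of the join α1α3 with M (hyperbolic cross product)
    (a11 a12 a13 a21 a22 a23 : F)
    (ha1 : a11 = (t1*u3 + t3*u1)*n - m*(t1*t3 + u1*u3) ∧
           a12 = (t1*t3 + u1*u3)*l - n*(t1*t3 - u1*u3) ∧
           a13 = l*(t1*u3 + t3*u1) - (t1*t3 - u1*u3)*m)
    -- a2 = meet of the join α2α3 with M
    (ha2 : a21 = (t2*u3 + t3*u2)*n - m*(t2*t3 + u2*u3) ∧
           a22 = (t2*t3 + u2*u3)*l - n*(t2*t3 - u2*u3) ∧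
           a23 = l*(t2*u3 + t3*u2) - (t2*t3 - u2*u3)*m)
    -- a1 and a2 are non-null points
    (hnn1 : a11^2 + a12^2 - a13^2 ≠ 0) (hnn2 : a21^2 + a22^2 - a23^2 ≠ 0)
    -- the denominators of the explicit formula are nonzero
    (hD1 : l*(t1^2 - u1^2) + 2*m*t1*u1 - n*(t1^2 + u1^2) ≠ 0)
    (hD2 : l*(t2^2 - u2^2) + 2*m*t2*u2 - n*(t2^2 + u2^2) ≠ 0)
    (q S : F)
    (hq : q = 1 - (a11*a21 + a12*a22 - a13*a23)^2 /
      ((a11^2 + a12^2 - a13^2) * (a21^2 + a22^2 - a23^2)))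
    (hS : S = 1 - ((t1*t2 - u1*u2)*l + (t1*u2 + t2*u1)*m - (t1*t2 + u1*u2)*n)^2 /
      (((t1*t2 - u1*u2)^2 + (t1*u2 + t2*u1)^2 - (t1*t2 + u1*u2)^2) * (l^2 + m^2 - n^2))) :
    q * S = 1 ∧
    q = -((t1*u2 - t2*u1)^2 * (l^2 + m^2 - n^2)) /
      ((l*(t1^2 - u1^2) + 2*m*t1*u1 - n*(t1^2 + u1^2)) *
       (l*(t2^2 - u2^2) + 2*m*t2*u2 - n*(t2^2 + u2^2))) := by
  obtain ⟨rfl, rfl, rfl⟩ := ha1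
  obtain ⟨rfl, rfl, rfl⟩ := ha2
  set M : Fin 3 → F := ![l, m, n]
  have hMM : hdot M M = l^2 + m^2 - n^2 := hdot_self M
  have hD (t u : F) : hdot (nullPoint t u) M = l*(t^2 - u^2) + 2*m*t*u - n*(t^2 + u^2) := by
    simp only [hdot, nullPoint, M, Matrix.cons_val_zero, Matrix.cons_val_one, Matrix.cons_val]; ring
  have hq' :
      q = quadrance (hcross (joinNull t1 u1 t3 u3) M) (hcross (joinNull t2 u2 t3 u3) M) := by
    rw [hq, quadrance, hdot_self, hdot_self]; rfl
  have hS' : S = spread (joinNull t1 u1 t2 u2) M := by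
    rw [hS, spread, quadrance, hdot_self, hdot_self]; rfl
  rw [quadrance_hcross_joinNull (by rwa [hdot_self]) (by rwa [hdot_self]), hD, hD, hMM] at hq'
  rw [spread_joinNull h12 (hMM ▸ hM), hD, hD, hMM] at hS'
  refine ⟨?_, hq'⟩
  rw [hq', hS', div_mul_div_comm, div_eq_one_iff_eq
    (mul_ne_zero (mul_ne_zero hD1 hD2) (mul_ne_zero (pow_ne_zero 2 h12) hM))]
  ring

/-- Null subtended quadrance theorem: q(a1,a2) · S(L,M) = 1, with the explicit
    formula for the quadrance. -/
theorem null_subtended_quadrance {F : Type*} [Field F] (hchar : (2 : F) ≠ 0)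
    (t1 u1 t2 u2 t3 u3 l m n : F)
    (h12 : t1*u2 - t2*u1 ≠ 0) (h13 : t1*u3 - t3*u1 ≠ 0) (h23 : t2*u3 - t3*u2 ≠ 0)
    (hM : l^2 + m^2 - n^2 ≠ 0)
    -- a1 = meet of the join α1α3 with M (hyperbolic cross product)
    (a11 a12 a13 a21 a22 a23 : F)
    (ha1 : a11 = (t1*u3 + t3*u1)*n - m*(t1*t3 + u1*u3) ∧
           a12 = (t1*t3 + u1*u3)*l - n*(t1*t3 - u1*u3) ∧
           a13 = l*(t1*u3 + t3*u1) - (t1*t3 - u1*u3)*m)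
    -- a2 = meet of the join α2α3 with M
    (ha2 : a21 = (t2*u3 + t3*u2)*n - m*(t2*t3 + u2*u3) ∧
           a22 = (t2*t3 + u2*u3)*l - n*(t2*t3 - u2*u3) ∧
           a23 = l*(t2*u3 + t3*u2) - (t2*t3 - u2*u3)*m)
    -- a1 and a2 are non-null points
    (hnn1 : a11^2 + a12^2 - a13^2 ≠ 0) (hnn2 : a21^2 + a22^2 - a23^2 ≠ 0)
    -- the denominators of the explicit formula are nonzero
    (hD1 : l*(t1^2 - u1^2) + 2*m*t1*u1 - n*(t1^2 + u1^2) ≠ 0)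
    (hD2 : l*(t2^2 - u2^2) + 2*m*t2*u2 - n*(t2^2 + u2^2) ≠ 0)
    (q S : F)
    (hq : q = 1 - (a11*a21 + a12*a22 - a13*a23)^2 /
      ((a11^2 + a12^2 - a13^2) * (a21^2 + a22^2 - a23^2)))
    (hS : S = 1 - ((t1*t2 - u1*u2)*l + (t1*u2 + t2*u1)*m - (t1*t2 + u1*u2)*n)^2 /
      (((t1*t2 - u1*u2)^2 + (t1*u2 + t2*u1)^2 - (t1*t2 + u1*u2)^2) * (l^2 + m^2 - n^2))) :
    q * S = 1 ∧
    q = -((t1*u2 - t2*u1)^2 * (l^2 + m^2 - n^2)) /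
      ((l*(t1^2 - u1^2) + 2*m*t1*u1 - n*(t1^2 + u1^2)) *
       (l*(t2^2 - u2^2) + 2*m*t2*u2 - n*(t2^2 + u2^2))) :=
  null_subtended_quadrance_general t1 u1 t2 u2 t3 u3 l m n h12 hM a11 a12 a13 a21 a22 a23 ha1 ha2
    hnn1 hnn2 hD1 hD2 q S hq hS
end

section
/- Let F be a field of characteristic not 2. Let α1 = α(t1:u1) and α2 = α(t2:u2) be distinct null points with join L3 = (t1t2-u1u2 : t1u2+t2u1 : t1t2+u1u2), and let a3 = [x:y:z] be a non-null point (x^2+y^2-z^2 ≠ 0) not on L3. Let h = ((t1t2-u1u2)x + (t1u2+t2u1)y - (t1t2+u1u2)z)^2 / ((x^2+y^2-z^2)(t1u2-t2u1)^2) be the quadrance of the couple (a3, L3), and let S3 be the spread between the lines a3α1 and a3α2 (computed via the hyperbolic cross product and the spread formula S = 1 - (w1·w2)^2/((w1·w1)(w2·w2)) with (l,m,n)·(l',m',n') = ll'+mm'-nn'). Then S3 = -4h/(1-h)^2, provided h ≠ 1 and the lines a3α1, a3α2 are non-null. -/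
/-!
Write `·` for the form `ll' + mm' - nn'`, let `P i = a3 · αi`, `Q = a3 · a3` and
`k = t1 u2 - t2 u1`. The lines `a3 αi` are the hyperbolic cross products `a3 × αi`, and the
Lagrange identity `(a × b) · (c × d) = (a · d)(b · c) - (a · c)(b · d)`, together with
`αi · αi = 0` and `α1 · α2 = -2k²`, gives `wi · wi = (P i)²` and
`w1 · w2 = P1 P2 + 2 Q k²`. On the other side `(L3 · a3)² = P1 P2 + Q k²`. Hence with
`p = P1 P2` and `d = Q k²` we have `h = (p + d) / d` and `S3 = 1 - (p + 2d)² / p²`,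
and the theorem is a rational identity in `p` and `d`.
-/

namespace UHG

section Identities

variable {R : Type*} [CommRing R]

def hdot (a b : Fin 3 → R) : R := a 0 * b 0 + a 1 * b 1 - a 2 * b 2

def hcross (a b : Fin 3 → R) : Fin 3 → R :=
  ![a 1 * b 2 - a 2 * b 1, a 2 * b 0 - a 0 * b 2, a 1 * b 0 - a 0 * b 1]

def nullPoint (t u : R) : Fin 3 → R := ![t ^ 2 - u ^ 2, 2 * t * u, t ^ 2 + u ^ 2]

def joinNullPoints (t1 u1 t2 u2 : R) : Fin 3 → R :=
  ![t1 * t2 - u1 * u2, t1 * u2 + t2 * u1, t1 * t2 + u1 * u2]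

lemma hdot_vec (a0 a1 a2 b0 b1 b2 : R) :
    hdot ![a0, a1, a2] ![b0, b1, b2] = a0 * b0 + a1 * b1 - a2 * b2 := rfl

lemma hdot_comm (a b : Fin 3 → R) : hdot a b = hdot b a := by
  simp only [hdot]; ring

lemma hdot_hcross_hcross (a b c d : Fin 3 → R) :
    hdot (hcross a b) (hcross c d) = hdot a d * hdot b c - hdot a c * hdot b d := by
  simp [hdot, hcross]; ring

lemma hcross_vec_nullPoint (x y z t u : R) :
    hcross ![x, y, z] (nullPoint t u) =
      ![y * (t ^ 2 + u ^ 2) - (2 * t * u) * z, z * (t ^ 2 - u ^ 2) - (t ^ 2 + u ^ 2) * x,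
        (t ^ 2 - u ^ 2) * y - x * (2 * t * u)] := by
  ext i; fin_cases i <;> simp [hcross, nullPoint] <;> ring

lemma hdot_nullPoint_self (t u : R) : hdot (nullPoint t u) (nullPoint t u) = 0 := by
  simp [hdot, nullPoint]; ring

lemma hdot_nullPoint_nullPoint (t1 u1 t2 u2 : R) :
    hdot (nullPoint t1 u1) (nullPoint t2 u2) = -2 * (t1 * u2 - t2 * u1) ^ 2 := by
  simp [hdot, nullPoint]; ring

lemma hdot_hcross_self_of_null (a : Fin 3 → R) {b : Fin 3 → R} (hb : hdot b b = 0) :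
    hdot (hcross a b) (hcross a b) = hdot a b ^ 2 := by
  rw [hdot_hcross_hcross, hb, hdot_comm b a]; ring

lemma hdot_hcross_nullPoint_hcross_nullPoint (a : Fin 3 → R) (t1 u1 t2 u2 : R) :
    hdot (hcross a (nullPoint t1 u1)) (hcross a (nullPoint t2 u2)) =
      hdot a (nullPoint t1 u1) * hdot a (nullPoint t2 u2)
        + 2 * (hdot a a * (t1 * u2 - t2 * u1) ^ 2) := by
  rw [hdot_hcross_hcross, hdot_nullPoint_nullPoint, hdot_comm (nullPoint t1 u1) a]; ring

lemma sq_hdot_joinNullPoints (a : Fin 3 → R) (t1 u1 t2 u2 : R) :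
    hdot (joinNullPoints t1 u1 t2 u2) a ^ 2 =
      hdot a (nullPoint t1 u1) * hdot a (nullPoint t2 u2)
        + hdot a a * (t1 * u2 - t2 * u1) ^ 2 := by
  simp [hdot, joinNullPoints, nullPoint]; ring

end Identities

lemma one_sub_div_sq_eq {F : Type*} [Field F] {p d : F} (hp : p ≠ 0) (hd : d ≠ 0) :
    1 - (p + 2 * d) ^ 2 / p ^ 2 = -4 * ((p + d) / d) / (1 - (p + d) / d) ^ 2 := by
  have h_one_sub : 1 - (p + d) / d = -p / d := by field_simp; ring
  rw [h_one_sub]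
  field_simp
  ring

end UHG

open UHG

theorem doubly_nil_triangle_general {F : Type*} [Field F]
    (t1 u1 t2 u2 x y z : F)
    (h12 : t1*u2 - t2*u1 ≠ 0)
    (hnn : x^2 + y^2 - z^2 ≠ 0)
    -- w1 = coordinates of the line a3 α1, w2 = coordinates of the line a3 α2
    (w11 w12 w13 w21 w22 w23 : F)
    (hw1 : w11 = y*(t1^2 + u1^2) - (2*t1*u1)*z ∧
           w12 = z*(t1^2 - u1^2) - (t1^2 + u1^2)*x ∧
           w13 = (t1^2 - u1^2)*y - x*(2*t1*u1))
    (hw2 : w21 = y*(t2^2 + u2^2) - (2*t2*u2)*z ∧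
           w22 = z*(t2^2 - u2^2) - (t2^2 + u2^2)*x ∧
           w23 = (t2^2 - u2^2)*y - x*(2*t2*u2))
    -- the lines a3 α1 and a3 α2 are non-null
    (hw1nn : w11^2 + w12^2 - w13^2 ≠ 0) (hw2nn : w21^2 + w22^2 - w23^2 ≠ 0)
    (h S3 : F)
    (hh : h = ((t1*t2 - u1*u2)*x + (t1*u2 + t2*u1)*y - (t1*t2 + u1*u2)*z)^2 /
      ((x^2 + y^2 - z^2) * (t1*u2 - t2*u1)^2))
    (hS3 : S3 = 1 - (w11*w21 + w12*w22 - w13*w23)^2 /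
      ((w11^2 + w12^2 - w13^2) * (w21^2 + w22^2 - w23^2))) :
    S3 = -4*h / (1 - h)^2 := by
  set a : Fin 3 → F := ![x, y, z]
  set P1 := hdot a (nullPoint t1 u1)
  set P2 := hdot a (nullPoint t2 u2)
  set d := (x^2 + y^2 - z^2) * (t1*u2 - t2*u1)^2
  have hw1 : hcross a (nullPoint t1 u1) = ![w11, w12, w13] := by
    obtain ⟨rfl, rfl, rfl⟩ := hw1; exact hcross_vec_nullPoint x y z t1 u1
  have hw2 : hcross a (nullPoint t2 u2) = ![w21, w22, w23] := by
    obtain ⟨rfl, rfl, rfl⟩ := hw2; exact hcross_vec_nullPoint x y z t2 u2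
  have hq1 : w11^2 + w12^2 - w13^2 = P1^2 := by
    rw [← hdot_hcross_self_of_null a (hdot_nullPoint_self t1 u1), hw1, hdot_vec]; ring
  have hq2 : w21^2 + w22^2 - w23^2 = P2^2 := by
    rw [← hdot_hcross_self_of_null a (hdot_nullPoint_self t2 u2), hw2, hdot_vec]; ring
  have hP : w11*w21 + w12*w22 - w13*w23 = P1*P2 + 2*d := by
    have := hdot_hcross_nullPoint_hcross_nullPoint a t1 u1 t2 u2
    rw [hw1, hw2, hdot_vec, hdot_vec] at this
    linear_combination this
  have hN : ((t1*t2 - u1*u2)*x + (t1*u2 + t2*u1)*y - (t1*t2 + u1*u2)*z)^2 = P1*P2 + d := by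
    have := sq_hdot_joinNullPoints a t1 u1 t2 u2
    rw [joinNullPoints, hdot_vec, hdot_vec] at this
    linear_combination this
  have hP1 : P1 ≠ 0 := fun h0 ↦ hw1nn (by rw [hq1, h0]; ring)
  have hP2 : P2 ≠ 0 := fun h0 ↦ hw2nn (by rw [hq2, h0]; ring)
  rw [hS3, hh, hq1, hq2, hP, hN, ← mul_pow]
  exact one_sub_div_sq_eq (mul_ne_zero hP1 hP2) (mul_ne_zero hnn (pow_ne_zero 2 h12))

/-- Doubly nil triangle theorem: S3 = -4h/(1-h)². -/
theorem doubly_nil_triangle {F : Type*} [Field F] (hchar : (2 : F) ≠ 0)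
    (t1 u1 t2 u2 x y z : F)
    (h12 : t1*u2 - t2*u1 ≠ 0)
    (hnn : x^2 + y^2 - z^2 ≠ 0)
    -- w1 = coordinates of the line a3 α1, w2 = coordinates of the line a3 α2
    (w11 w12 w13 w21 w22 w23 : F)
    (hw1 : w11 = y*(t1^2 + u1^2) - (2*t1*u1)*z ∧
           w12 = z*(t1^2 - u1^2) - (t1^2 + u1^2)*x ∧
           w13 = (t1^2 - u1^2)*y - x*(2*t1*u1))
    (hw2 : w21 = y*(t2^2 + u2^2) - (2*t2*u2)*z ∧
           w22 = z*(t2^2 - u2^2) - (t2^2 + u2^2)*x ∧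
           w23 = (t2^2 - u2^2)*y - x*(2*t2*u2))
    -- the lines a3 α1 and a3 α2 are non-null
    (hw1nn : w11^2 + w12^2 - w13^2 ≠ 0) (hw2nn : w21^2 + w22^2 - w23^2 ≠ 0)
    (h S3 : F)
    (hh : h = ((t1*t2 - u1*u2)*x + (t1*u2 + t2*u1)*y - (t1*t2 + u1*u2)*z)^2 /
      ((x^2 + y^2 - z^2) * (t1*u2 - t2*u1)^2))
    (hh1 : h ≠ 1)
    (hS3 : S3 = 1 - (w11*w21 + w12*w22 - w13*w23)^2 /
      ((w11^2 + w12^2 - w13^2) * (w21^2 + w22^2 - w23^2))) :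
    S3 = -4*h / (1 - h)^2 :=
  doubly_nil_triangle_general t1 u1 t2 u2 x y z h12 hnn w11 w12 w13 w21 w22 w23 hw1 hw2 hw1nn hw2nn
    h S3 hh hS3
end
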